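/- Let (X, δ) be a finite diversity of negative type. Then the induced metric d(x, y) = δ({x, y}) on X is L1-embeddable. -/

import Mathlib

/-!
Möbius inversion on the Boolean lattice writes `δ C = ∑_{T ⊇ C} α T`. Testing negative type
against `x = μ(T, ·)`, whose partial sums `∑_{A ⊆ S} x A` are the indicator of `S = T`, turns the
quadratic form into `α T`, so `α T ≤ 0` for every proper nonempty `T`. As `δ` vanishes on
singletons, `∑_{T ∋ x} α T = 0`, and then `δ {x, y} = ∑_T (-α T / 2) |1_T x - 1_T y|` is a
nonnegative combination of cut metrics, which embeds in `ℓ₁` with one coordinate per `T`.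
-/

open Finset IncidenceAlgebra

section Moebius

variable {𝕜 L : Type*}

theorem exists_eq_sum_Ici [Ring 𝕜] [PartialOrder L] [LocallyFiniteOrder L]
    [LocallyFiniteOrderTop L] [DecidableEq L] (g : L → 𝕜) :
    ∃ f : L → 𝕜, ∀ a, g a = ∑ b ∈ Ici a, f b := by
  refine ⟨fun b ↦ ∑ c ∈ Ici b, mu 𝕜 b c * g c, fun a ↦ ?_⟩
  rw [sum_comm' (t' := Ici a) (s' := fun c ↦ Icc a c)]
  · simp_rw [← sum_mul, sum_Icc_mu_left, boole_mul]
    rw [sum_ite_eq, if_pos (mem_Ici.2 le_rfl)]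
  · intro b c
    simp only [mem_Ici, mem_Icc]
    exact ⟨fun h ↦ ⟨⟨h.1, h.2⟩, h.1.trans h.2⟩, fun h ↦ ⟨h.1.1, h.1.2⟩⟩

theorem sum_sum_mul_mul_sup_eq_sum_mul_sq [CommRing 𝕜] [SemilatticeSup L] [Fintype L]
    [LocallyFiniteOrderTop L] [LocallyFiniteOrderBot L] {δ α : L → 𝕜}
    (hα : ∀ c, δ c = ∑ s ∈ Ici c, α s) (x : L → 𝕜) :
    ∑ a, ∑ b, x a * x b * δ (a ⊔ b) = ∑ s, α s * (∑ a ∈ Iic s, x a) ^ 2 := by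
  classical
  have hIci : ∀ c, ∑ s ∈ Ici c, α s = ∑ s, if c ≤ s then α s else 0 := fun c ↦ by
    rw [← sum_filter, filter_le_eq_Ici]
  have hIic : ∀ s, ∑ a ∈ Iic s, x a = ∑ a, if a ≤ s then x a else 0 := fun s ↦ by
    rw [← sum_filter, filter_ge_eq_Iic]
  calc ∑ a, ∑ b, x a * x b * δ (a ⊔ b)
      = ∑ a, ∑ b, ∑ s, (if a ≤ s then x a else 0) * (if b ≤ s then x b else 0) * α s := by
        refine sum_congr rfl fun a _ ↦ sum_congr rfl fun b _ ↦ ?_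
        rw [hα, hIci, mul_sum]
        refine sum_congr rfl fun s _ ↦ ?_
        by_cases ha : a ≤ s <;> by_cases hb : b ≤ s <;> simp [ha, hb]
    _ = ∑ s, ∑ a, ∑ b, (if a ≤ s then x a else 0) * (if b ≤ s then x b else 0) * α s := by
        rw [sum_congr rfl fun _ _ ↦ sum_comm]; exact sum_comm
    _ = ∑ s, α s * (∑ a ∈ Iic s, x a) ^ 2 := by
        refine sum_congr rfl fun s _ ↦ ?_
        rw [hIic, sq, sum_mul_sum, mul_comm, sum_mul]
        simp_rw [sum_mul]

end Moebius

section Diversity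

variable {X : Type*} [Fintype X] [DecidableEq X]

def IsNegativeType (δ : Finset X → ℝ) : Prop :=
  ∀ x : Finset X → ℝ, x ∅ = 0 → ∑ A, x A = 0 → ∑ A, ∑ B, x A * x B * δ (A ∪ B) ≤ 0

theorem IsNegativeType.nonpos_of_eq_sum_Ici {δ α : Finset X → ℝ} (hδ : IsNegativeType δ)
    (hα : ∀ C, δ C = ∑ T ∈ Ici C, α T) {T : Finset X} (hT : T.Nonempty) (hTX : T ≠ univ) :
    α T ≤ 0 := by
  have hmu : ∀ S, ∑ A ∈ Iic S, mu ℝ T A = if T = S then 1 else 0 := fun S ↦ by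
    rw [← sum_Icc_mu_right T S]
    refine (sum_subset Icc_subset_Iic_self fun A _ hA ↦ apply_eq_zero_of_not_le ?_ _).symm
    simp_all
  have hneg := hδ (mu ℝ T) (apply_eq_zero_of_not_le (by simpa using hT.ne_empty) _)
    (by rw [← Iic_top, hmu, if_neg (by exact hTX)])
  simp_rw [← sup_eq_union, sum_sum_mul_mul_sup_eq_sum_mul_sq hα, hmu] at hneg
  simpa using hneg

theorem eq_sum_abs_sub_of_eq_sum_Ici {δ α : Finset X → ℝ} (hα : ∀ C, δ C = ∑ T ∈ Ici C, α T)
    (hcut : ∀ T : Finset X, T.Nonempty → T ≠ univ → α T ≤ 0) {x y : X}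
    (hx : δ {x} = 0) (hy : δ {y} = 0) :
    δ {x, y} = ∑ T, |(if x ∈ T then α T / 2 else 0) - (if y ∈ T then α T / 2 else 0)| := by
  have hIci : ∀ C, δ C = ∑ T, if C ⊆ T then α T else 0 := fun C ↦ by
    rw [hα, ← sum_filter, ← filter_le_eq_Ici]
  have hterm : ∀ T : Finset X,
      |(if x ∈ T then α T / 2 else 0) - (if y ∈ T then α T / 2 else 0)| =
        (if {x, y} ⊆ T then α T else 0) - (if {x} ⊆ T then α T else 0) / 2 -
          (if {y} ⊆ T then α T else 0) / 2 := fun T ↦ by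
    by_cases hxT : x ∈ T <;> by_cases hyT : y ∈ T
    · simp [insert_subset_iff, hxT, hyT]; ring
    · have := hcut T ⟨x, hxT⟩ (ne_of_mem_of_not_mem' (mem_univ y) hyT).symm
      simp [insert_subset_iff, hxT, hyT, abs_of_nonpos (by linarith : α T / 2 ≤ 0)]
    · have := hcut T ⟨y, hyT⟩ (ne_of_mem_of_not_mem' (mem_univ x) hxT).symm
      simp [insert_subset_iff, hxT, hyT, abs_of_nonpos (by linarith : α T / 2 ≤ 0)]
    · simp [insert_subset_iff, hxT, hyT]
  simp_rw [hterm, sum_sub_distrib, ← sum_div, ← hIci, hx, hy]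
  ring

end Diversity

theorem stmt12_general {X : Type*} [Fintype X] [DecidableEq X] (δ : Finset X → ℝ)
    (h2 : ∀ A : Finset X, δ A = 0 ↔ A.card ≤ 1)
    (hneg : ∀ x : Finset X → ℝ, x ∅ = 0 → (∑ A : Finset X, x A) = 0 →
      ∑ A : Finset X, ∑ B : Finset X, x A * x B * δ (A ∪ B) ≤ 0) :
    ∃ (m : ℕ) (ψ : X → Fin m → ℝ), ∀ x y : X,
      δ {x, y} = ∑ i : Fin m, |ψ x i - ψ y i| := by
  obtain ⟨α, hα⟩ := exists_eq_sum_Ici δ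
  have hsing : ∀ a : X, δ {a} = 0 := fun a ↦ (h2 {a}).2 (card_singleton a).le
  have hcut : ∀ T : Finset X, T.Nonempty → T ≠ univ → α T ≤ 0 := fun T ↦
    IsNegativeType.nonpos_of_eq_sum_Ici hneg hα
  let e := Fintype.equivFin (Finset X)
  refine ⟨Fintype.card (Finset X), fun x i ↦ if x ∈ e.symm i then α (e.symm i) / 2 else 0,
    fun x y ↦ ?_⟩
  rw [eq_sum_abs_sub_of_eq_sum_Ici hα hcut (hsing x) (hsing y)]
  exact (e.symm.sum_comp _).symm

/-- The induced metric `d(x,y) = δ({x,y})` of a finite negative type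
diversity is `L₁`-embeddable. -/
theorem stmt12 {X : Type*} [Fintype X] [DecidableEq X] (δ : Finset X → ℝ)
    (h1 : ∀ A : Finset X, 0 ≤ δ A)
    (h2 : ∀ A : Finset X, δ A = 0 ↔ A.card ≤ 1)
    (h3 : ∀ A B C : Finset X, B.Nonempty → δ (A ∪ C) ≤ δ (A ∪ B) + δ (B ∪ C))
    (hneg : ∀ x : Finset X → ℝ, x ∅ = 0 → (∑ A : Finset X, x A) = 0 →
      ∑ A : Finset X, ∑ B : Finset X, x A * x B * δ (A ∪ B) ≤ 0) :
    ∃ (m : ℕ) (ψ : X → Fin m → ℝ), ∀ x y : X,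
      δ {x, y} = ∑ i : Fin m, |ψ x i - ψ y i| :=
  stmt12_general δ h2 hneg
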